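/- A globally hyperbolic poset is locally compact in its interval topology. -/

import Mathlib

open Set

/-- `a` is way below `x`. -/
def wayBelow {α : Type*} [Preorder α] (a x : α) : Prop :=
  ∀ S : Set α, S.Nonempty → DirectedOn (· ≤ ·) S → ∀ d, IsLUB S d → x ≤ d →
    ∃ s ∈ S, a ≤ s

/-- A poset is continuous if every element is the supremum of a directed set
of elements way below it. -/
def ContinuousPoset (α : Type*) [Preorder α] : Prop :=
  ∀ x : α, ∃ S : Set α, S ⊆ {a | wayBelow a x} ∧ S.Nonempty ∧
    DirectedOn (· ≤ ·) S ∧ IsLUB S x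

/-- A basis for a continuous poset. -/
def PosetBasis {α : Type*} [Preorder α] (B : Set α) : Prop :=
  ∀ x : α, ∃ S : Set α, S ⊆ B ∩ {a | wayBelow a x} ∧ S.Nonempty ∧
    DirectedOn (· ≤ ·) S ∧ IsLUB S x

/-- Scott open sets: upper sets inaccessible by directed suprema. -/
def ScottOpen {α : Type*} [Preorder α] (U : Set α) : Prop :=
  IsUpperSet U ∧ ∀ S : Set α, S.Nonempty → DirectedOn (· ≤ ·) S → ∀ d, IsLUB S d →
    d ∈ U → (S ∩ U).Nonempty

/-- The Scott topology. -/
def scottTop (α : Type*) [Preorder α] : TopologicalSpace α :=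
  TopologicalSpace.generateFrom {U | ScottOpen U}

/-- A bicontinuous poset. -/
def Bicontinuous (α : Type*) [Preorder α] : Prop :=
  ContinuousPoset α ∧
  (∀ x y : α, wayBelow x y ↔
    ∀ S : Set α, S.Nonempty → DirectedOn (· ≥ ·) S → ∀ i, IsGLB S i → i ≤ x →
      ∃ s ∈ S, s ≤ y) ∧
  (∀ x : α, DirectedOn (· ≥ ·) {y | wayBelow x y} ∧ IsGLB {y | wayBelow x y} x)

/-- The basic open intervals `(a,b) = {x | a ≪ x ≪ b}`. -/
def intervalBasis (α : Type*) [Preorder α] : Set (Set α) :=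
  {s | ∃ a b : α, s = {x | wayBelow a x ∧ wayBelow x b}}

/-- The interval topology, generated by the sets `(a,b)`. -/
def intervalTop (α : Type*) [Preorder α] : TopologicalSpace α :=
  TopologicalSpace.generateFrom (intervalBasis α)

/-- A globally hyperbolic poset: bicontinuous, with compact closed intervals. -/
def GloballyHyperbolic (α : Type*) [PartialOrder α] : Prop :=
  Bicontinuous α ∧ ∀ a b : α, @IsCompact α (intervalTop α) (Set.Icc a b)

/-- The poset of closed intervals `[a,b]`, `a ≤ b`, under reverse inclusion. -/
def IX (α : Type*) [PartialOrder α] := {p : α × α // p.1 ≤ p.2}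

instance IX.instPartialOrder {α : Type*} [PartialOrder α] : PartialOrder (IX α) where
  le x y := x.1.1 ≤ y.1.1 ∧ y.1.2 ≤ x.1.2
  le_refl x := ⟨le_refl _, le_refl _⟩
  le_trans x y z h1 h2 := ⟨h1.1.trans h2.1, h2.2.trans h1.2⟩
  le_antisymm x y h1 h2 :=
    Subtype.ext (Prod.ext_iff.mpr ⟨le_antisymm h1.1 h2.1, le_antisymm h2.2 h1.2⟩)

section Rel

variable {β : Type*}

/-- Directedness with respect to an arbitrary relation. -/
def relDirectedOn (r : β → β → Prop) (S : Set β) : Prop :=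
  ∀ x ∈ S, ∀ y ∈ S, ∃ z ∈ S, r x z ∧ r y z

/-- Least upper bound with respect to an arbitrary relation. -/
def relIsLUB (r : β → β → Prop) (S : Set β) (d : β) : Prop :=
  (∀ s ∈ S, r s d) ∧ ∀ u, (∀ s ∈ S, r s u) → r d u

/-- The way-below relation with respect to an arbitrary relation. -/
def relWayBelow (r : β → β → Prop) (a x : β) : Prop :=
  ∀ S : Set β, S.Nonempty → relDirectedOn r S → ∀ d, relIsLUB r S d → r x d →
    ∃ s ∈ S, r a s

/-- An abstract basis: a transitive relation, interpolative from the `-` direction. -/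
def AbstractBasis (r : β → β → Prop) : Prop :=
  Transitive r ∧ ∀ (F : Finset β) (x : β), (∀ y ∈ F, r y x) →
    ∃ z, (∀ y ∈ F, r y z) ∧ r z x

/-- Interpolation in the `+` direction. -/
def PlusInterpolative (r : β → β → Prop) : Prop :=
  ∀ (F : Finset β) (x : β), (∀ y ∈ F, r x y) → ∃ z, r x z ∧ (∀ y ∈ F, r z y)

/-- An ideal: a nonempty directed lower set. -/
def IsIdeal (r : β → β → Prop) (I : Set β) : Prop :=
  I.Nonempty ∧ (∀ x y, r x y → y ∈ I → x ∈ I) ∧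
    ∀ x ∈ I, ∀ y ∈ I, ∃ z ∈ I, r x z ∧ r y z

/-- The ideal completion: ideals ordered by inclusion. -/
def IdealCompletion (r : β → β → Prop) := {I : Set β // IsIdeal r I}

instance IdealCompletion.instPartialOrder {β : Type*} (r : β → β → Prop) :
    PartialOrder (IdealCompletion r) where
  le I J := I.1 ⊆ J.1
  le_refl I := subset_rfl
  le_trans I J K h1 h2 := Set.Subset.trans h1 h2
  le_antisymm I J h1 h2 := Subtype.ext (Set.Subset.antisymm h1 h2)

end Rel

/-- The order on maximal elements induced by interval endpoints. -/
def maxLe {α : Type*} (left right : α → α) (a b : α) : Prop :=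
  ∃ x, left x = a ∧ right x = b

/-- An interval poset. -/
structure IntervalPoset (α : Type*) [PartialOrder α] where
  left : α → α
  right : α → α
  left_max : ∀ x, IsMax (left x)
  right_max : ∀ x, IsMax (right x)
  glb : ∀ x, IsGLB {left x, right x} x
  glue : ∀ x y, right x = left y →
    ∃ z, IsGLB {x, y} z ∧ left z = left x ∧ right z = right y
  sub_left : ∀ x p, IsMax p → x ≤ p →
    ∃ z, IsGLB {left x, p} z ∧ left z = left x ∧ right z = p
  sub_right : ∀ x p, IsMax p → x ≤ p →
    ∃ z, IsGLB {p, right x} z ∧ left z = p ∧ right z = right x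

/-- An interval domain. -/
structure IntervalDomain (α : Type*) [PartialOrder α] extends IntervalPoset α where
  dcpo : ∀ S : Set α, S.Nonempty → DirectedOn (· ≤ ·) S → ∃ d, IsLUB S d
  cont : ContinuousPoset α
  ax1 : ∀ x p, IsMax p → wayBelow x p →
    (∀ z, IsGLB {left x, p} z → ∃ u, wayBelow z u) ∧
    (∀ z, IsGLB {p, right x} z → ∃ u, wayBelow z u)
  ax2b : ∀ x : α, (∃ u, wayBelow x u) ↔
    (∀ y, left y = left x → y ≤ x →
      relWayBelow (fun u v => u ≤ v ∧ right u = right y ∧ right v = right y) y (right y))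
  ax2c : ∀ x : α, (∃ u, wayBelow x u) ↔
    (∀ y, right y = right x → y ≤ x →
      relWayBelow (fun u v => u ≤ v ∧ left u = left y ∧ left v = left y) y (left y))
  ax3a : ∀ (p : α) (S : Set α), S.Nonempty → S ⊆ {z | left z = p} →
    DirectedOn (· ≤ ·) S → ∀ u, IsLUB S u →
      left u = p ∧ ∀ (q : α) (T : Set α), T.Nonempty → T ⊆ {z | left z = q} →
        DirectedOn (· ≤ ·) T → ∀ v, IsLUB T v → right '' T = right '' S →
          right u = right v
  ax3b : ∀ (q : α) (S : Set α), S.Nonempty → S ⊆ {z | right z = q} →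
    DirectedOn (· ≤ ·) S → ∀ u, IsLUB S u →
      right u = q ∧ ∀ (p : α) (T : Set α), T.Nonempty → T ⊆ {z | right z = p} →
        DirectedOn (· ≤ ·) T → ∀ v, IsLUB T v → left '' T = left '' S →
          left u = left v
  ax4 : ∀ x : α, @IsCompact α (scottTop α) ({y | x ≤ y} ∩ {y | IsMax y})

/-! Interpolation `a ≪ c ≪ x` holds in every continuous poset, and by bicontinuity also in the
order dual. It shrinks an open interval `(a,b)` around `x` to a closed interval `[c,d]` with
`c ≪ x ≪ d`, which is still a neighbourhood of `x` because it contains `(c,d)`. Since bicontinuity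
also lets two open intervals around `x` be refined to a single one, the open intervals form a basis,
so these closed intervals form a neighbourhood basis at `x`; they are compact by global
hyperbolicity. -/

open OrderDual Filter TopologicalSpace

section WayBelow

variable {β : Type*} [Preorder β] {a a₁ a₂ b c x : β}

lemma wayBelow.le (h : wayBelow a x) : a ≤ x := by
  obtain ⟨s, rfl, hs⟩ :=
    h {x} (singleton_nonempty x) (directedOn_singleton x) x isLUB_singleton le_rfl
  exact hs

lemma wayBelow.trans_le (h : wayBelow a b) (hbc : b ≤ c) : wayBelow a c :=
  fun S hS hdir d hd hcd => h S hS hdir d hd (hbc.trans hcd)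

lemma LE.le.trans_wayBelow (hab : a ≤ b) (h : wayBelow b c) : wayBelow a c :=
  fun S hS hdir d hd hcd =>
    let ⟨s, hsS, hbs⟩ := h S hS hdir d hd hcd
    ⟨s, hsS, hab.trans hbs⟩

namespace ContinuousPoset

lemma exists_wayBelow_ge (hc : ContinuousPoset β) (h₁ : wayBelow a₁ x) (h₂ : wayBelow a₂ x) :
    ∃ c, wayBelow c x ∧ a₁ ≤ c ∧ a₂ ≤ c := by
  obtain ⟨D, hDx, hD, hDdir, hDlub⟩ := hc x
  obtain ⟨s₁, hs₁, ha₁⟩ := h₁ D hD hDdir x hDlub le_rfl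
  obtain ⟨s₂, hs₂, ha₂⟩ := h₂ D hD hDdir x hDlub le_rfl
  obtain ⟨c, hcD, hs₁c, hs₂c⟩ := hDdir s₁ hs₁ s₂ hs₂
  exact ⟨c, hDx hcD, ha₁.trans hs₁c, ha₂.trans hs₂c⟩

lemma nonempty_wayBelow (hc : ContinuousPoset β) (x : β) : {a | wayBelow a x}.Nonempty :=
  let ⟨_, hDx, hD, _⟩ := hc x
  hD.mono hDx

lemma isLUB_wayBelow (hc : ContinuousPoset β) (x : β) : IsLUB {a | wayBelow a x} x := by
  obtain ⟨D, hDx, -, -, hDlub⟩ := hc x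
  exact ⟨fun a ha => wayBelow.le ha, fun _ hb => hDlub.2 (upperBounds_mono_set hDx hb)⟩

lemma exists_wayBelow_wayBelow (hc : ContinuousPoset β) (hax : wayBelow a x) :
    ∃ c, wayBelow a c ∧ wayBelow c x := by
  set S := {u | ∃ v, wayBelow u v ∧ wayBelow v x}
  have hS : S.Nonempty := by
    obtain ⟨v, hvx⟩ := hc.nonempty_wayBelow x
    obtain ⟨u, huv⟩ := hc.nonempty_wayBelow v
    exact ⟨u, v, huv, hvx⟩
  have hSdir : DirectedOn (· ≤ ·) S := by
    rintro u₁ ⟨v₁, hu₁, hv₁⟩ u₂ ⟨v₂, hu₂, hv₂⟩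
    obtain ⟨v, hvx, hv₁v, hv₂v⟩ := hc.exists_wayBelow_ge hv₁ hv₂
    obtain ⟨u, huv, hu₁u, hu₂u⟩ := hc.exists_wayBelow_ge (hu₁.trans_le hv₁v) (hu₂.trans_le hv₂v)
    exact ⟨u, ⟨v, huv, hvx⟩, hu₁u, hu₂u⟩
  -- every `v ≪ x` is the supremum of the `u ≪ v`, all of which lie in `S`
  have hSlub : IsLUB S x := by
    refine ⟨fun u ⟨v, huv, hvx⟩ => huv.le.trans hvx.le, fun b hb => ?_⟩
    exact (hc.isLUB_wayBelow x).2 fun v hvx =>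
      (hc.isLUB_wayBelow v).2 fun u huv => hb ⟨v, huv, hvx⟩
  obtain ⟨u, ⟨v, huv, hvx⟩, hau⟩ := hax S hS hSdir x hSlub le_rfl
  exact ⟨v, hau.trans_wayBelow huv, hvx⟩

end ContinuousPoset

end WayBelow

namespace Bicontinuous

variable {β : Type*} [Preorder β] {a b b₁ b₂ x : β}

lemma toDual_wayBelow_toDual (h : Bicontinuous β) :
    wayBelow (toDual b) (toDual a) ↔ wayBelow a b :=
  (h.2.1 a b).symm

lemma continuousPoset_orderDual (h : Bicontinuous β) : ContinuousPoset βᵒᵈ := by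
  intro x
  obtain ⟨hdir, hglb⟩ := h.2.2 (ofDual x)
  -- if nothing were way above `x`, then `x` would be the top element, hence way below itself
  have hne : {y | wayBelow (ofDual x) y}.Nonempty := by
    by_contra hempty
    rw [not_nonempty_iff_eq_empty] at hempty
    have htop : ∀ y, y ≤ ofDual x := fun y => hglb.2 (by simp [hempty])
    have hxx : wayBelow (ofDual x) (ofDual x) :=
      (h.2.1 _ _).2 fun _ ⟨s, hs⟩ _ _ _ _ => ⟨s, hs, htop s⟩
    exact (hempty ▸ hxx : ofDual x ∈ (∅ : Set β))
  exact ⟨ofDual ⁻¹' {y | wayBelow (ofDual x) y}, fun a ha => h.toDual_wayBelow_toDual.2 ha,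
    hne, hdir, hglb⟩

lemma exists_wayBelow_le (h : Bicontinuous β) (h₁ : wayBelow x b₁) (h₂ : wayBelow x b₂) :
    ∃ d, wayBelow x d ∧ d ≤ b₁ ∧ d ≤ b₂ := by
  obtain ⟨d, hd, h₁, h₂⟩ := h.continuousPoset_orderDual.exists_wayBelow_ge
    (x := toDual x) (a₁ := toDual b₁) (a₂ := toDual b₂)
    (h.toDual_wayBelow_toDual.2 h₁) (h.toDual_wayBelow_toDual.2 h₂)
  exact ⟨ofDual d, h.toDual_wayBelow_toDual.1 hd, h₁, h₂⟩

lemma exists_wayBelow_wayBelow (h : Bicontinuous β) (hxb : wayBelow x b) :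
    ∃ d, wayBelow x d ∧ wayBelow d b := by
  obtain ⟨d, hbd, hdx⟩ := h.continuousPoset_orderDual.exists_wayBelow_wayBelow
    (x := toDual x) (a := toDual b) (h.toDual_wayBelow_toDual.2 hxb)
  exact ⟨ofDual d, h.toDual_wayBelow_toDual.1 hdx, h.toDual_wayBelow_toDual.1 hbd⟩

lemma exists_Icc_subset (h : Bicontinuous β) (hax : wayBelow a x) (hxb : wayBelow x b) :
    ∃ c d, (wayBelow c x ∧ wayBelow x d) ∧ Icc c d ⊆ {y | wayBelow a y ∧ wayBelow y b} := by
  obtain ⟨c, hac, hcx⟩ := h.1.exists_wayBelow_wayBelow hax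
  obtain ⟨d, hxd, hdb⟩ := h.exists_wayBelow_wayBelow hxb
  exact ⟨c, d, ⟨hcx, hxd⟩, fun y hy => ⟨hac.trans_le hy.1, hy.2.trans_wayBelow hdb⟩⟩

section IntervalTopology

attribute [local instance] intervalTop

lemma isTopologicalBasis_intervalBasis (h : Bicontinuous β) :
    IsTopologicalBasis (intervalBasis β) where
  exists_subset_inter := by
    rintro _ ⟨a₁, b₁, rfl⟩ _ ⟨a₂, b₂, rfl⟩ x ⟨⟨ha₁, hb₁⟩, ha₂, hb₂⟩
    obtain ⟨c, hcx, hac₁, hac₂⟩ := h.1.exists_wayBelow_ge ha₁ ha₂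
    obtain ⟨d, hxd, hdb₁, hdb₂⟩ := h.exists_wayBelow_le hb₁ hb₂
    exact ⟨_, ⟨c, d, rfl⟩, ⟨hcx, hxd⟩, fun y ⟨hcy, hyd⟩ =>
      ⟨⟨hac₁.trans_wayBelow hcy, hyd.trans_le hdb₁⟩, hac₂.trans_wayBelow hcy, hyd.trans_le hdb₂⟩⟩
  sUnion_eq := by
    refine eq_univ_of_forall fun x => ?_
    obtain ⟨a, hax⟩ := h.1.nonempty_wayBelow x
    obtain ⟨b, hxb⟩ := h.continuousPoset_orderDual.nonempty_wayBelow (toDual x)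
    exact ⟨_, ⟨a, ofDual b, rfl⟩, hax, h.toDual_wayBelow_toDual.1 hxb⟩
  eq_generateFrom := rfl

lemma nhds_hasBasis_Icc (h : Bicontinuous β) (x : β) :
    (nhds x).HasBasis (fun p : β × β => wayBelow p.1 x ∧ wayBelow x p.2) fun p => Icc p.1 p.2 :=
  h.isTopologicalBasis_intervalBasis.nhds_hasBasis.to_hasBasis
    (by
      rintro _ ⟨⟨a, b, rfl⟩, hax, hxb⟩
      obtain ⟨c, d, hcd, hsub⟩ := h.exists_Icc_subset hax hxb
      exact ⟨(c, d), hcd, hsub⟩)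
    fun p hp => ⟨_, ⟨⟨p.1, p.2, rfl⟩, hp⟩, fun _ hy => ⟨hy.1.le, hy.2.le⟩⟩

end IntervalTopology

end Bicontinuous

/-- a globally hyperbolic poset is locally compact in its interval
topology. -/
theorem globallyHyperbolic_locallyCompact {α : Type*} [PartialOrder α]
    (h : GloballyHyperbolic α) :
    @LocallyCompactSpace α (intervalTop α) :=
  @LocallyCompactSpace.of_hasBasis α (intervalTop α) _ _ _ h.1.nhds_hasBasis_Icc
    fun _ p _ => h.2 p.1 p.2
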